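/- arXiv:1101.5067 — 2 statements merged into one kernel-verified Lean document; each statement's English description precedes it below -/
import Mathlib

section
/- Let X be a β-set, d ≥ 1, and S = s_d(X) the associated d-symbol. Let δ* = (0, 1, …, d−1; d) be the partition d-hook data tuple. Then the multiset 𝓗(X) of hook lengths of X equals the multiset 𝓗^{δ*}(S) of δ*-lengths of the hooks of S. -/
/-- `X^{+s} = (X + s) ∪ {0,…,s−1}` for a β-set `X`. -/
def shiftUp (X : Finset ℕ) (s : ℕ) : Finset ℕ :=
  X.image (· + s) ∪ Finset.range s

/-- The `d`-symbol `s_d(X)` associated to a β-set `X`: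
`X_i^{(d)} = {k ∈ ℕ : i + k*d ∈ X}`. -/
def sd (d : ℕ) (X : Finset ℕ) : Fin d → Finset ℕ :=
  fun i => (X.filter fun a => a % d = (i : ℕ)).image fun a => a / d

/-- The inverse of `s_d`, recovering the β-set of a `d`-symbol. -/
def sdInv (d : ℕ) (S : Fin d → Finset ℕ) : Finset ℕ :=
  Finset.univ.biUnion fun i => (S i).image fun k => (i : ℕ) + k * d

/-- Hooks of a β-set `X`: pairs `(a,b)` with `a > b`, `a ∈ X`, `b ∉ X`. -/
def betaHooks (X : Finset ℕ) : Finset (ℕ × ℕ) :=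
  (X ×ˢ Finset.range (X.sup id + 1)).filter fun p => p.2 < p.1 ∧ p.2 ∉ X

/-- Hooks of a `d`-symbol `S`: quadruples `(a,b,i,j)` with `a ∈ S i`, `b ∉ S j`,
and either `a > b`, or `a = b` and `i > j`. -/
def symbolHooks {d : ℕ} (S : Fin d → Finset ℕ) : Finset (ℕ × ℕ × Fin d × Fin d) :=
  (Finset.range ((Finset.univ.sup fun i => (S i).sup id) + 1) ×ˢ
      Finset.range ((Finset.univ.sup fun i => (S i).sup id) + 1) ×ˢ
      (Finset.univ : Finset (Fin d)) ×ˢ (Finset.univ : Finset (Fin d))).filter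
    fun z => z.1 ∈ S z.2.2.1 ∧ z.2.1 ∉ S z.2.2.2 ∧
      (z.2.1 < z.1 ∨ (z.1 = z.2.1 ∧ z.2.2.2 < z.2.2.1))

/-- The partition `p(X)` of a β-set `X = {a_1 > … > a_t}`, as the multiset of the
nonzero numbers among `a_i − (t−i)`; the element `a` contributes the part
`a − #{b ∈ X : b < a}`. -/
def partitionOf (X : Finset ℕ) : Multiset ℕ :=
  Multiset.filter (· ≠ 0) (X.val.map fun a => a - (X.filter (· < a)).card)

/-- `r`, the maximal number of parts among the partitions `p(X_i)` of a `d`-symbol. -/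
def quotCard {d : ℕ} (S : Fin d → Finset ℕ) : ℕ :=
  Finset.univ.sup fun i => Multiset.card (partitionOf (S i))

/-- `Y` is the balanced quotient `Q(S)` of `S`: each `Y i` is the (unique) β-set of
cardinality `r` with `p(Y i) = p(S i)`, where `r` is the maximal number of parts
among the `p(S i)`. -/
def IsBalancedQuotient {d : ℕ} (S Y : Fin d → Finset ℕ) : Prop :=
  ∀ i, (Y i).card = quotCard S ∧ partitionOf (Y i) = partitionOf (S i)

/-- The core `C(S) = ([x_0],…,[x_{d−1}])` of a `d`-symbol, `x_i = |X_i|`. -/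
def coreSymbol {d : ℕ} (S : Fin d → Finset ℕ) : Fin d → Finset ℕ :=
  fun i => Finset.range (S i).card

/-- The `δ`-length `k(a−b) + c_i − c_j` of a hook `(a,b,i,j)`, for the
`d`-hook data tuple `δ = (c_0,…,c_{d−1};k)`. -/
noncomputable def hookLen {d : ℕ} (c : Fin d → ℝ) (k : ℝ)
    (z : ℕ × ℕ × Fin d × Fin d) : ℝ :=
  k * ((z.1 - z.2.1 : ℕ) : ℝ) + c z.2.2.1 - c z.2.2.2

/-- The multiset `𝓗^δ(S)` of `δ`-lengths of all hooks of `S`. -/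
noncomputable def hookLens {d : ℕ} (c : Fin d → ℝ) (k : ℝ)
    (S : Fin d → Finset ℕ) : Multiset ℝ :=
  (symbolHooks S).val.map (hookLen c k)

/-- `H_{ij}^ℓ(S)`, the set of hooks `(a,b,i,j)` of `S` with `a − b = ℓ`. -/
def Hij {d : ℕ} (S : Fin d → Finset ℕ) (i j : Fin d) (ℓ : ℕ) :
    Finset (ℕ × ℕ × Fin d × Fin d) :=
  (symbolHooks S).filter fun z => z.2.2.1 = i ∧ z.2.2.2 = j ∧ z.1 - z.2.1 = ℓ

/-- The sign-modified length `h̄^{δ_S}` (on hooks of the balanced quotient), where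
`x` records the cardinalities `x_i = |X_i|` of `S`, and `δ_S = (c_i + x_i k; k)`.
For a hook `z = (a,b,u,v)` with `ℓ = a − b`: relabelling so that `Δ = x_i − x_j ≥ 0`,
the sign is `+` if `z` lies in position `(i,j)`, or in position `(j,i)` with `ℓ > Δ`,
or in position `(j,i)` with `ℓ = Δ` and `i < j`; otherwise the sign is `−`. -/
noncomputable def signedLen {d : ℕ} (x : Fin d → ℕ) (c : Fin d → ℝ) (k : ℝ)
    (z : ℕ × ℕ × Fin d × Fin d) : ℝ :=
  if x z.2.2.2 ≤ x z.2.2.1 then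
    k * ((z.1 - z.2.1 : ℕ) : ℝ) + (c z.2.2.1 + (x z.2.2.1 : ℝ) * k)
      - (c z.2.2.2 + (x z.2.2.2 : ℝ) * k)
  else if x z.2.2.2 - x z.2.2.1 < z.1 - z.2.1 ∨
      (z.1 - z.2.1 = x z.2.2.2 - x z.2.2.1 ∧ (z.2.2.2 : ℕ) < (z.2.2.1 : ℕ)) then
    k * ((z.1 - z.2.1 : ℕ) : ℝ) + (c z.2.2.1 + (x z.2.2.1 : ℝ) * k)
      - (c z.2.2.2 + (x z.2.2.2 : ℝ) * k)
  else
    -(k * ((z.1 - z.2.1 : ℕ) : ℝ) + (c z.2.2.1 + (x z.2.2.1 : ℝ) * k)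
      - (c z.2.2.2 + (x z.2.2.2 : ℝ) * k))

/-- The permutation `σ_{d,ℓ,e}` of `ℕ`:
`σ(r(dℓ) + sd + t) = r(dℓ) + sd + ((t + re) mod d)`. -/
def twistFun (d ℓ e : ℕ) (n : ℕ) : ℕ :=
  d * ℓ * (n / (d * ℓ)) + d * (n % (d * ℓ) / d) + (n % d + n / (d * ℓ) * e) % d

/-!
Euclidean division `a ↦ (a / d, a % d)` is an order isomorphism from `ℕ` onto `ℕ ×ₗ Fin d`,
and `a ∈ X` iff `a / d` lies in the `(a % d)`-th component of `s_d(X)`. Hence it carries the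
hooks `(a, b)` of `X` bijectively onto the hooks `(a / d, b / d, a % d, b % d)` of `s_d(X)`,
and the `δ*`-length `d (a / d - b / d) + a % d - b % d` of the latter is just `a - b`.
-/

lemma mem_sd_iff {d : ℕ} (X : Finset ℕ) (i : Fin d) (k : ℕ) :
    k ∈ sd d X i ↔ (i : ℕ) + k * d ∈ X := by
  have hd : 0 < d := i.pos
  simp only [sd, Finset.mem_image, Finset.mem_filter]
  constructor
  · rintro ⟨a, ⟨ha, hmod⟩, rfl⟩
    rwa [← hmod, Nat.mod_add_div']
  · intro h
    refine ⟨(i : ℕ) + k * d, ⟨h, ?_⟩, ?_⟩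
    · rw [Nat.add_mul_mod_self_right, Nat.mod_eq_of_lt i.isLt]
    · rw [Nat.add_mul_div_right _ _ hd, Nat.div_eq_of_lt i.isLt, Nat.zero_add]

lemma mem_betaHooks (X : Finset ℕ) (p : ℕ × ℕ) :
    p ∈ betaHooks X ↔ p.1 ∈ X ∧ p.2 < p.1 ∧ p.2 ∉ X := by
  simp only [betaHooks, Finset.mem_filter, Finset.mem_product, Finset.mem_range]
  refine ⟨by tauto, fun ⟨h1, h2, h3⟩ => ⟨⟨h1, ?_⟩, h2, h3⟩⟩
  have := Finset.le_sup (f := id) h1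
  simp only [id] at this
  omega

lemma mem_symbolHooks {d : ℕ} (S : Fin d → Finset ℕ) (z : ℕ × ℕ × Fin d × Fin d) :
    z ∈ symbolHooks S ↔ z.1 ∈ S z.2.2.1 ∧ z.2.1 ∉ S z.2.2.2 ∧
      (z.2.1 < z.1 ∨ (z.1 = z.2.1 ∧ z.2.2.2 < z.2.2.1)) := by
  simp only [symbolHooks, Finset.mem_filter, Finset.mem_product, Finset.mem_range,
    Finset.mem_univ, and_true]
  refine ⟨by tauto, fun ⟨h1, h2, h3⟩ => ⟨⟨?_, ?_⟩, h1, h2, h3⟩⟩ <;>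
  · have h := (Finset.le_sup (f := id) h1).trans
      (Finset.le_sup (f := fun i => (S i).sup id) (Finset.mem_univ z.2.2.1))
    simp only [id] at h
    omega

section

variable {d : ℕ} [NeZero d]

lemma strictMono_toLex_divModEquiv : StrictMono fun n => toLex (Nat.divModEquiv d n) := by
  intro a b hab
  have hdiv : a / d ≤ b / d := Nat.div_le_div_right hab.le
  simp only [Nat.divModEquiv_apply, Prod.Lex.toLex_lt_toLex, Fin.lt_def, Fin.val_ofNat]
  rcases hdiv.lt_or_eq with h | h
  · exact Or.inl h
  · refine Or.inr ⟨h, ?_⟩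
    have := Nat.div_add_mod a d
    have := Nat.div_add_mod b d
    have : d * (a / d) = d * (b / d) := by rw [h]
    omega

lemma div_mem_sd_ofNat_iff (X : Finset ℕ) (a : ℕ) :
    a / d ∈ sd d X (Fin.ofNat d a) ↔ a ∈ X := by
  rw [mem_sd_iff, Fin.val_ofNat, Nat.mod_add_div']

variable (d) in
def hookCoords : ℕ × ℕ ≃ ℕ × ℕ × Fin d × Fin d :=
  ((Nat.divModEquiv d).prodCongr (Nat.divModEquiv d)).trans
    ((Equiv.prodProdProdComm ℕ (Fin d) ℕ (Fin d)).trans (Equiv.prodAssoc ℕ ℕ (Fin d × Fin d)))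

lemma hookCoords_apply (p : ℕ × ℕ) :
    hookCoords d p = (p.1 / d, p.2 / d, Fin.ofNat d p.1, Fin.ofNat d p.2) := rfl

lemma hookCoords_mem_symbolHooks_sd_iff (X : Finset ℕ) (p : ℕ × ℕ) :
    hookCoords d p ∈ symbolHooks (sd d X) ↔ p ∈ betaHooks X := by
  have hlt := (strictMono_toLex_divModEquiv (d := d)).lt_iff_lt (a := p.2) (b := p.1)
  simp only [Nat.divModEquiv_apply, Prod.Lex.toLex_lt_toLex] at hlt
  rw [mem_symbolHooks, hookCoords_apply, mem_betaHooks, ← hlt]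
  simp only [div_mem_sd_ofNat_iff, eq_comm (a := p.1 / d)]
  tauto

lemma symbolHooks_sd_eq_map (X : Finset ℕ) :
    symbolHooks (sd d X) = (betaHooks X).map (hookCoords d).toEmbedding := by
  ext z
  obtain ⟨p, rfl⟩ := (hookCoords d).surjective z
  rw [hookCoords_mem_symbolHooks_sd_iff, Finset.mem_map_equiv, Equiv.symm_apply_apply]

lemma hookLen_hookCoords {a b : ℕ} (hba : b ≤ a) :
    hookLen (fun i => ((i : ℕ) : ℝ)) d (hookCoords d (a, b)) = ((a - b : ℕ) : ℝ) := by
  have hdiv : b / d ≤ a / d := Nat.div_le_div_right hba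
  have ha : (a : ℝ) = d * (a / d : ℕ) + (a % d : ℕ) := mod_cast (Nat.div_add_mod a d).symm
  have hb : (b : ℝ) = d * (b / d : ℕ) + (b % d : ℕ) := mod_cast (Nat.div_add_mod b d).symm
  rw [hookLen, hookCoords_apply, Nat.cast_sub hba, Nat.cast_sub hdiv, ha, hb]
  simp only [Fin.val_ofNat]
  ring

end

/-- With the partition `d`-hook data tuple `δ* = (0,1,…,d−1; d)`, the multiset of
hook lengths of a β-set `X` equals the multiset of `δ*`-lengths of the hooks of
the associated `d`-symbol `s_d(X)`. -/
theorem hookLens_beta_eq_partition_tuple (d : ℕ) (hd : 0 < d) (X : Finset ℕ) :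
    (betaHooks X).val.map (fun p => ((p.1 - p.2 : ℕ) : ℝ)) =
      hookLens (fun i => ((i : ℕ) : ℝ)) (d : ℝ) (sd d X) := by
  have : NeZero d := NeZero.of_pos hd
  rw [hookLens, symbolHooks_sd_eq_map, Finset.map_val, Multiset.map_map]
  refine Multiset.map_congr rfl fun p hp => ?_
  exact (hookLen_hookCoords ((mem_betaHooks X p).1 hp).2.1.le).symm
end

section
/- Let d ≥ 1 and let X be a β-set. With x_i = |X_i^{(d)}|, δ = (x_0 d, 1 + x_1 d, …, (d−1) + x_{d−1} d; d), Q the balanced quotient of s_d(X), and C_d(X) = s_d^{-1}(C(s_d(X))) the d-core of X, the product of all hook lengths of X satisfies ∏𝓗(X) = (∏𝓗(C_d(X))) · |∏𝓗^δ(Q)|, where ∏M denotes the product of all elements of the multiset M. -/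
/-!
On a `d`-runner abacus the hook of `X` from bead `i + a d` to gap `j + b d` has length
`|d (a - b) + i - j|`. So for runners `A = X_i`, `B = X_j`, the hooks from `A` to `B` and those
from `B` to `A` all contribute `φ (a - b)` for one function `φ` of the difference `a - b` of the
positions on `A` and on `B`. If `#A = #B + t`, shifting `B` up by `t` balances the two runners: the
hooks from `A` to `B` of difference at least `t` and all hooks from `B` to `A` correspond to hooks
of the balanced pair, and the leftover ones have difference `m ∈ [0, t]` on both sides. There a
count settles it: `#(A \ B↑m) = (t - m) + #(B↑m \ A)`, where `B↑m` is `B` shifted up by `m`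
and `t - m` counts the hooks of difference `m` of the core pair `([#A], [#B])`. Multiplying over
all ordered pairs of runners counts every hook twice, so it proves the identity squared and up to
sign; the hook products of β-sets are positive.
-/

open Finset

namespace BetaSet

lemma mem_shiftUp {X : Finset ℕ} {s a : ℕ} :
    a ∈ shiftUp X s ↔ a < s ∨ s ≤ a ∧ a - s ∈ X := by
  simp only [shiftUp, mem_union, mem_image, mem_range]
  constructor
  · rintro (⟨b, hb, rfl⟩ | h)
    · simpa using hb
    · exact .inl h
  · rintro (h | ⟨h, hX⟩)
    · exact .inr h
    · exact .inl ⟨a - s, hX, by omega⟩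

@[simp]
lemma add_mem_shiftUp {X : Finset ℕ} {s a : ℕ} : a + s ∈ shiftUp X s ↔ a ∈ X := by
  simp [mem_shiftUp]

lemma notMem_shiftUp {X : Finset ℕ} {s a : ℕ} :
    a ∉ shiftUp X s ↔ s ≤ a ∧ a - s ∉ X := by
  rw [mem_shiftUp, not_or, not_lt, not_and]
  exact ⟨fun h => ⟨h.1, h.2 h.1⟩, fun h => ⟨h.1, fun _ => h.2⟩⟩

lemma shiftUp_eq_disjUnion (X : Finset ℕ) (s : ℕ) :
    shiftUp X s = (X.map (addRightEmbedding s)).disjUnion (range s) (by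
      simp only [disjoint_left, mem_map, mem_range]; rintro _ ⟨a, -, rfl⟩; simp) := by
  rw [disjUnion_eq_union, map_eq_image]
  rfl

lemma card_shiftUp (X : Finset ℕ) (s : ℕ) : #(shiftUp X s) = #X + s := by
  rw [shiftUp_eq_disjUnion, card_disjUnion, card_map, card_range]

lemma shiftUp_shiftUp (X : Finset ℕ) (s u : ℕ) :
    shiftUp (shiftUp X s) u = shiftUp X (s + u) := by
  ext a
  simp only [mem_shiftUp]
  constructor
  · rintro (h | ⟨h, h' | ⟨h'', hX⟩⟩)
    · omega
    · omega
    · exact .inr ⟨by omega, by rwa [Nat.sub_sub, Nat.add_comm] at hX⟩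
  · rintro (h | ⟨h, hX⟩)
    · by_cases hu : a < u
      · exact .inl hu
      · exact .inr ⟨by omega, .inl (by omega)⟩
    · exact .inr ⟨by omega, .inr ⟨by omega, by rwa [Nat.sub_sub, Nat.add_comm]⟩⟩

lemma shiftUp_range (n s : ℕ) : shiftUp (range n) s = range (n + s) := by
  ext a
  simp only [mem_shiftUp, mem_range]
  omega

def part (X : Finset ℕ) (a : ℕ) : ℕ := a - #{b ∈ X | b < a}

lemma partitionOf_eq (X : Finset ℕ) :
    partitionOf X = (X.val.map (part X)).filter (· ≠ 0) := rfl

lemma card_filter_lt_shiftUp (X : Finset ℕ) (s b : ℕ) :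
    #{a ∈ shiftUp X s | a < b + s} = #{a ∈ X | a < b} + s := by
  have : {a ∈ range s | a < b + s} = range s := filter_true_of_mem fun a ha => by
    simp only [mem_range] at ha; omega
  rw [shiftUp_eq_disjUnion, filter_disjUnion, card_disjUnion, filter_map, card_map, this,
    card_range]
  simp

lemma part_shiftUp_add (X : Finset ℕ) (s a : ℕ) :
    part (shiftUp X s) (a + s) = part X a := by
  simp only [part, card_filter_lt_shiftUp]
  omega

lemma part_shiftUp_of_lt {X : Finset ℕ} {s a : ℕ} (ha : a < s) :
    part (shiftUp X s) a = 0 := by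
  have : {b ∈ shiftUp X s | b < a} = range a := by
    ext b; simp only [mem_filter, mem_shiftUp, mem_range]; omega
  simp [part, this]

lemma partitionOf_shiftUp (X : Finset ℕ) (s : ℕ) :
    partitionOf (shiftUp X s) = partitionOf X := by
  have hlow : ((range s).val.map (part (shiftUp X s))).filter (· ≠ 0) = 0 := by
    simp only [Multiset.filter_eq_nil, Multiset.mem_map, mem_val, mem_range]
    rintro _ ⟨a, ha, rfl⟩
    simp [part_shiftUp_of_lt ha]
  rw [partitionOf_eq, partitionOf_eq, shiftUp_eq_disjUnion, disjUnion_val, Multiset.map_add,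
    Multiset.filter_add, ← shiftUp_eq_disjUnion, hlow, add_zero, map_val, Multiset.map_map]
  congr 2
  funext a
  exact part_shiftUp_add X s a

lemma card_partitionOf_le (X : Finset ℕ) : Multiset.card (partitionOf X) ≤ #X :=
  (Multiset.card_le_card (Multiset.filter_le _ _)).trans_eq (Multiset.card_map _ _)

lemma card_le_of_forall_lt {X : Finset ℕ} {a : ℕ} (h : ∀ x ∈ X, x < a) : #X ≤ a :=
  (card_le_card fun x hx => mem_range.2 (h x hx)).trans_eq (card_range a)

section InsertMax

variable {X : Finset ℕ} {a : ℕ}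

lemma part_insert_self (h : ∀ x ∈ X, x < a) : part (insert a X) a = a - #X := by
  rw [part, filter_insert, if_neg (lt_irrefl a), filter_true_of_mem h]

lemma part_insert_of_mem (h : ∀ x ∈ X, x < a) {x : ℕ} (hx : x ∈ X) :
    part (insert a X) x = part X x := by
  rw [part, part, filter_insert, if_neg (h x hx).not_gt]

lemma part_le_of_forall_lt (h : ∀ x ∈ X, x < a) {x : ℕ} (hx : x ∈ X) :
    part X x ≤ a - #X := by
  have hsplit := card_filter_add_card_filter_not (s := X) (p := (· < x))
  have hbig : #{y ∈ X | ¬y < x} ≤ a - x := by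
    refine (card_le_card fun y hy => ?_).trans_eq (Nat.card_Ico x a)
    simp only [mem_filter, not_lt] at hy
    exact mem_Ico.2 ⟨hy.2, h y hy.1⟩
  have := h x hx
  unfold part
  omega

lemma partitionOf_insert (h : ∀ x ∈ X, x < a) :
    partitionOf (insert a X) = ({a - #X} : Multiset ℕ).filter (· ≠ 0) + partitionOf X := by
  rw [partitionOf_eq, partitionOf_eq, insert_val_of_notMem fun ha => lt_irrefl a (h a ha),
    Multiset.map_cons, ← Multiset.singleton_add, Multiset.filter_add, part_insert_self h,
    Multiset.map_congr rfl fun x hx => part_insert_of_mem h hx]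

lemma sup_partitionOf_insert (h : ∀ x ∈ X, x < a) :
    (partitionOf (insert a X)).sup = a - #X := by
  refine le_antisymm (Multiset.sup_le.2 fun p hp => ?_) ?_
  · simp only [partitionOf_eq, Multiset.mem_filter, Multiset.mem_map, mem_val] at hp
    obtain ⟨⟨x, hx, rfl⟩, -⟩ := hp
    rcases mem_insert.1 hx with rfl | hx
    · rw [part_insert_self h]
    · rw [part_insert_of_mem h hx]
      exact part_le_of_forall_lt h hx
  · rcases Nat.eq_zero_or_pos (a - #X) with h0 | hpos
    · rw [h0]; exact Nat.zero_le _
    · refine Multiset.le_sup ?_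
      rw [partitionOf_insert h]
      simp [hpos.ne']

end InsertMax

theorem eq_of_card_eq_of_partitionOf_eq {X Y : Finset ℕ} (hc : #X = #Y)
    (hp : partitionOf X = partitionOf Y) : X = Y := by
  induction X using Finset.induction_on_max generalizing Y with
  | empty => exact (card_eq_zero.1 hc.symm).symm
  | insert a X hX ih =>
    have hne : Y.Nonempty := card_pos.1 (hc ▸ card_pos.2 (insert_nonempty a X))
    set b := Y.max' hne
    have hY : ∀ y ∈ Y.erase b, y < b := fun y => Y.lt_max'_of_mem_erase_max' hne
    rw [← insert_erase (Y.max'_mem hne)] at hc hp ⊢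
    rw [card_insert_of_notMem fun ha => lt_irrefl a (hX a ha),
      card_insert_of_notMem (notMem_erase b Y), Nat.add_right_cancel_iff] at hc
    have hab : a = b := by
      have hsup := congrArg Multiset.sup hp
      rw [sup_partitionOf_insert hX, sup_partitionOf_insert hY] at hsup
      have := card_le_of_forall_lt hX
      have := card_le_of_forall_lt hY
      omega
    rw [partitionOf_insert hX, partitionOf_insert hY, hab, hc] at hp
    rw [hab, ih hc (add_left_cancel hp)]

/-- The offset `s ∈ {0, 1}` decides whether the ties `(a, a)` count. -/
def pairHooks (A B : Finset ℕ) (s : ℕ) : Finset (ℕ × ℕ) :=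
  {p ∈ A ×ˢ range (A.sup id + 1) | p.2 ∉ B ∧ p.2 + s ≤ p.1}

section PairHooks

variable {A B : Finset ℕ} {s s' t : ℕ} {M : Type*} [CommMonoid M]

lemma mem_pairHooks {p : ℕ × ℕ} :
    p ∈ pairHooks A B s ↔ p.1 ∈ A ∧ p.2 ∉ B ∧ p.2 + s ≤ p.1 := by
  simp only [pairHooks, mem_filter, mem_product, mem_range]
  constructor
  · rintro ⟨⟨ha, -⟩, hb⟩
    exact ⟨ha, hb⟩
  · rintro ⟨ha, hb, hs⟩
    have := le_sup (f := id) ha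
    exact ⟨⟨ha, Nat.lt_succ_of_le (by simp only [id] at this; omega)⟩, hb, hs⟩

lemma mem_pairHooks_sdiff {p : ℕ × ℕ} :
    p ∈ pairHooks A B s \ pairHooks A B s' ↔
      p.1 ∈ A ∧ p.2 ∉ B ∧ p.2 + s ≤ p.1 ∧ p.1 < p.2 + s' := by
  simp only [mem_sdiff, mem_pairHooks, not_and, not_le]
  constructor
  · rintro ⟨⟨ha, hb, hs⟩, h⟩
    exact ⟨ha, hb, hs, h ha hb⟩
  · rintro ⟨ha, hb, hs, h⟩
    exact ⟨⟨ha, hb, hs⟩, fun _ _ => h⟩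

lemma pairHooks_anti (h : s ≤ s') : pairHooks A B s' ⊆ pairHooks A B s := fun p hp => by
  simp only [mem_pairHooks] at hp ⊢
  exact ⟨hp.1, hp.2.1, by omega⟩

lemma pairHooks_range_eq_empty {n m : ℕ} (h : n ≤ m + s) :
    pairHooks (range n) (range m) s = ∅ :=
  eq_empty_of_forall_notMem fun p hp => by
    simp only [mem_pairHooks, mem_range, not_lt] at hp
    omega

lemma prod_pairHooks_shiftUp (u : ℕ) (f : ℕ × ℕ → M) :
    ∏ p ∈ pairHooks (shiftUp A u) (shiftUp B u) s, f p =
      ∏ p ∈ pairHooks A B s, f (p.1 + u, p.2 + u) := by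
  refine (prod_nbij' (fun p => (p.1 + u, p.2 + u)) (fun p => (p.1 - u, p.2 - u)) ?_ ?_ ?_ ?_
    fun _ _ => rfl).symm
  · rintro ⟨a, b⟩ hp
    simp only [mem_pairHooks, add_mem_shiftUp] at hp ⊢
    exact ⟨hp.1, hp.2.1, by omega⟩
  · rintro ⟨a, b⟩ hp
    simp only [mem_pairHooks, notMem_shiftUp] at hp
    obtain ⟨ha, ⟨hu, hb⟩, hs⟩ := hp
    obtain ⟨b, rfl⟩ := Nat.exists_eq_add_of_le' hu
    obtain ⟨a, rfl⟩ : ∃ a', a = a' + u := ⟨a - u, by omega⟩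
    simp only [add_mem_shiftUp, add_tsub_cancel_right, mem_pairHooks] at ha hb ⊢
    exact ⟨ha, hb, by omega⟩
  · rintro ⟨a, b⟩ -
    simp
  · rintro ⟨a, b⟩ hp
    simp only [mem_pairHooks, notMem_shiftUp] at hp
    exact Prod.ext (Nat.sub_add_cancel (by omega)) (Nat.sub_add_cancel hp.2.1.1)

lemma prod_pairHooks_shiftUp_right (f : ℕ × ℕ → M) :
    ∏ p ∈ pairHooks A (shiftUp B t) s, f p =
      ∏ p ∈ pairHooks A B (t + s), f (p.1, p.2 + t) := by
  refine (prod_nbij' (fun p => (p.1, p.2 + t)) (fun p => (p.1, p.2 - t)) ?_ ?_ ?_ ?_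
    fun _ _ => rfl).symm
  · rintro ⟨a, b⟩ hp
    simp only [mem_pairHooks, add_mem_shiftUp] at hp ⊢
    exact ⟨hp.1, hp.2.1, by omega⟩
  · rintro ⟨a, b⟩ hp
    simp only [mem_pairHooks, notMem_shiftUp] at hp ⊢
    exact ⟨hp.1, hp.2.1.2, by omega⟩
  · rintro ⟨a, b⟩ -
    simp
  · rintro ⟨a, b⟩ hp
    simp only [mem_pairHooks, notMem_shiftUp] at hp
    exact Prod.ext rfl (Nat.sub_add_cancel hp.2.1.1)

lemma prod_pairHooks_shiftUp_left (f : ℕ × ℕ → M) :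
    ∏ p ∈ pairHooks (shiftUp B t) A (t + s), f p =
      ∏ p ∈ pairHooks B A s, f (p.1 + t, p.2) := by
  refine (prod_nbij' (fun p => (p.1 + t, p.2)) (fun p => (p.1 - t, p.2)) ?_ ?_ ?_ ?_
    fun _ _ => rfl).symm
  · rintro ⟨b, a⟩ hp
    simp only [mem_pairHooks, add_mem_shiftUp] at hp ⊢
    exact ⟨hp.1, hp.2.1, by omega⟩
  · rintro ⟨b, a⟩ hp
    simp only [mem_pairHooks, mem_shiftUp] at hp ⊢
    obtain ⟨hb, ha, hs⟩ := hp
    exact ⟨hb.resolve_left (by omega) |>.2, ha, by omega⟩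
  · rintro ⟨b, a⟩ -
    simp
  · rintro ⟨b, a⟩ hp
    simp only [mem_pairHooks] at hp
    exact Prod.ext (Nat.sub_add_cancel (by omega)) rfl

lemma card_sdiff_shiftUp (A B : Finset ℕ) (m : ℕ) :
    #(A \ shiftUp B m) + (#B + m) = #A + #(shiftUp B m \ A) := by
  have hA := card_sdiff_add_card_inter A (shiftUp B m)
  have hB := card_sdiff_add_card_inter (shiftUp B m) A
  rw [inter_comm, card_shiftUp] at hB
  omega

lemma card_filter_pairHooks_sdiff {m : ℕ} (hm : s ≤ m) (hmt : m < t + s) :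
    #{p ∈ pairHooks A B s \ pairHooks A B (t + s) | (p.1 : ℤ) - p.2 = m} =
      #(A \ shiftUp B m) := by
  refine card_nbij' (fun p => p.1) (fun a => (a, a - m)) ?_ ?_ ?_ fun _ _ => rfl
  · rintro ⟨a, b⟩ hp
    simp only [coe_filter, mem_pairHooks_sdiff, Set.mem_ofPred_eq] at hp
    obtain ⟨⟨ha, hb, -⟩, hab⟩ := hp
    obtain rfl : a = b + m := by omega
    simpa [ha] using hb
  · intro a ha
    simp only [coe_sdiff, Set.mem_sdiff, mem_coe, notMem_shiftUp] at ha
    simp only [coe_filter, mem_pairHooks_sdiff, Set.mem_ofPred_eq]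
    exact ⟨⟨ha.1, ha.2.2, by omega, by omega⟩, by omega⟩
  · rintro ⟨a, b⟩ hp
    simp only [coe_filter, mem_pairHooks_sdiff, Set.mem_ofPred_eq] at hp
    exact Prod.ext rfl (by simp only; omega)

lemma card_filter_shiftUp_pairHooks_sdiff {m : ℕ} (hm : s ≤ m) (hmt : m < t + s)
    (hs : s + s' = 1) :
    #{p ∈ pairHooks (shiftUp B t) A s' \ pairHooks (shiftUp B t) A (t + s') |
        (p.2 : ℤ) - p.1 + t = m} = #(shiftUp B m \ A) := by
  have hBt : shiftUp B t = shiftUp (shiftUp B m) (t - m) := by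
    rw [shiftUp_shiftUp, Nat.add_sub_cancel' (by omega)]
  rw [hBt]
  refine card_nbij' (fun p => p.2) (fun a => (a + (t - m), a)) ?_ ?_ ?_ fun _ _ => rfl
  · rintro ⟨b, a⟩ hp
    simp only [coe_filter, mem_pairHooks_sdiff, Set.mem_ofPred_eq] at hp
    obtain ⟨⟨hb, ha, -⟩, hab⟩ := hp
    obtain rfl : b = a + (t - m) := by omega
    simpa [ha] using hb
  · intro a ha
    simp only [coe_sdiff, Set.mem_sdiff, mem_coe] at ha
    simp only [coe_filter, mem_pairHooks_sdiff, Set.mem_ofPred_eq, add_mem_shiftUp]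
    exact ⟨⟨ha.1, ha.2, by omega, by omega⟩, by omega⟩
  · rintro ⟨b, a⟩ hp
    simp only [coe_filter, mem_pairHooks_sdiff, Set.mem_ofPred_eq] at hp
    exact Prod.ext (by simp only; omega) rfl

lemma prod_pairHooks_sdiff (hAB : #A = #B + t) (hs : s + s' = 1) (φ : ℤ → M) :
    ∏ p ∈ pairHooks A B s \ pairHooks A B (t + s), φ (p.1 - p.2) =
      (∏ p ∈ pairHooks (range #A) (range #B) s, φ (p.1 - p.2)) *
        ∏ p ∈ pairHooks (shiftUp B t) A s' \ pairHooks (shiftUp B t) A (t + s'),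
          φ (p.2 - p.1 + t) := by
  have fiberwise (u : Finset (ℕ × ℕ)) (g : ℕ × ℕ → ℤ)
      (hg : ∀ p ∈ u, g p ∈ Ico (s : ℤ) (t + s)) :
      ∏ p ∈ u, φ (g p) = ∏ n ∈ Ico (s : ℤ) (t + s), φ n ^ #{p ∈ u | g p = n} := by
    rw [← prod_fiberwise_of_maps_to' hg]
    simp only [prod_const]
  have hcore : pairHooks (range #A) (range #B) s =
      pairHooks (range #A) (range #B) s \ pairHooks (range #A) (range #B) (t + s) := by
    rw [pairHooks_range_eq_empty (s := t + s) (by omega), sdiff_empty]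
  rw [hcore, fiberwise _ _ ?maps₁, fiberwise _ _ ?maps₂, fiberwise _ _ ?maps₃,
    ← prod_mul_distrib]
  · refine prod_congr rfl fun n hn => ?_
    rw [mem_Ico] at hn
    lift n to ℕ using (by omega)
    rw [← pow_add, card_filter_pairHooks_sdiff (by omega) (by omega),
      card_filter_pairHooks_sdiff (by omega) (by omega),
      card_filter_shiftUp_pairHooks_sdiff (by omega) (by omega) hs]
    have h := card_sdiff_shiftUp A B n
    have hcore_card := card_sdiff_shiftUp (range #A) (range #B) n
    rw [shiftUp_range, card_range, card_range,
      sdiff_eq_empty_iff_subset.2 (range_subset_range.2 (show #B + n ≤ #A by omega)),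
      card_empty] at hcore_card
    rw [shiftUp_range]
    congr 1
    omega
  case maps₁ | maps₂ =>
    rintro ⟨a, b⟩ hp
    rw [mem_pairHooks_sdiff] at hp
    rw [mem_Ico]
    omega
  case maps₃ =>
    rintro ⟨b, a⟩ hp
    rw [mem_pairHooks_sdiff] at hp
    rw [mem_Ico]
    omega

end PairHooks

section PairHookProd

variable {M : Type*} [CommMonoid M]

def pairHookProd (φ : ℤ → M) (A B : Finset ℕ) (s s' : ℕ) : M :=
  (∏ p ∈ pairHooks A B s, φ (p.1 - p.2)) * ∏ p ∈ pairHooks B A s', φ (p.2 - p.1)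

lemma pairHookProd_comm (φ : ℤ → M) (A B : Finset ℕ) (s s' : ℕ) :
    pairHookProd φ A B s s' = pairHookProd (fun n => φ (-n)) B A s' s := by
  simp only [pairHookProd, neg_sub]
  exact mul_comm _ _

lemma pairHookProd_shiftUp (φ : ℤ → M) (A B : Finset ℕ) (s s' u : ℕ) :
    pairHookProd φ (shiftUp A u) (shiftUp B u) s s' = pairHookProd φ A B s s' := by
  simp only [pairHookProd, prod_pairHooks_shiftUp, Nat.cast_add, add_sub_add_right_eq_sub]

lemma pairHookProd_eq_of_card_eq_add {A B : Finset ℕ} {s s' t : ℕ} (hAB : #A = #B + t)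
    (hs : s + s' = 1) (φ : ℤ → M) :
    pairHookProd φ A B s s' = pairHookProd φ (range #A) (range #B) s s' *
      pairHookProd (fun n => φ (n + t)) A (shiftUp B t) s s' := by
  simp only [pairHookProd]
  rw [← prod_sdiff (pairHooks_anti (A := A) (B := B) (Nat.le_add_left s t)),
    ← prod_sdiff (pairHooks_anti (A := shiftUp B t) (B := A) (Nat.le_add_left s' t)),
    prod_pairHooks_sdiff hAB hs,
    prod_pairHooks_shiftUp_right, prod_pairHooks_shiftUp_left,
    pairHooks_range_eq_empty (n := #B) (m := #A) (by omega), prod_empty]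
  simp only [Nat.cast_add, sub_add_cancel, sub_add_eq_sub_sub, mul_one]
  ac_rfl

theorem pairHookProd_eq {A B : Finset ℕ} {s s' u v : ℕ} (h : #A + u = #B + v)
    (hs : s + s' = 1) (φ : ℤ → M) :
    pairHookProd φ A B s s' = pairHookProd φ (range #A) (range #B) s s' *
      pairHookProd (fun n => φ (n + #A - #B)) (shiftUp A u) (shiftUp B v) s s' := by
  wlog hBA : #B ≤ #A generalizing A B s s' u v φ
  · rw [pairHookProd_comm, this h.symm (by omega) _ (by omega), pairHookProd_comm φ,
      pairHookProd_comm _ (shiftUp A u)]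
    congr 2
    funext n
    congr 1
    ring
  obtain ⟨t, ht⟩ := Nat.exists_eq_add_of_le hBA
  rw [show v = t + u by omega, ← shiftUp_shiftUp, pairHookProd_shiftUp,
    pairHookProd_eq_of_card_eq_add ht hs, ht]
  congr 2
  funext n
  push_cast
  ring_nf

end PairHookProd

section Symbols

variable {d : ℕ}

def tieOffset (i j : Fin d) : ℕ := if j < i then 0 else 1

lemma tieOffset_le_one (i j : Fin d) : tieOffset i j ≤ 1 := by
  unfold tieOffset
  split_ifs <;> omega

lemma add_tieOffset_le_iff {i j : Fin d} {a b : ℕ} :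
    b + tieOffset i j ≤ a ↔ b < a ∨ a = b ∧ j < i := by
  unfold tieOffset
  split_ifs with h <;> simp only [h, and_true, and_false, or_false] <;> omega

lemma mem_symbolHooks {S : Fin d → Finset ℕ} {z : ℕ × ℕ × Fin d × Fin d} :
    z ∈ symbolHooks S ↔
      (z.1, z.2.1) ∈ pairHooks (S z.2.2.1) (S z.2.2.2) (tieOffset z.2.2.1 z.2.2.2) := by
  rw [mem_pairHooks, add_tieOffset_le_iff]
  simp only [symbolHooks, mem_filter, mem_product, mem_range, mem_univ, and_true,
    and_iff_right_iff_imp]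
  rintro ⟨ha, -, hab⟩
  have : z.1 ≤ univ.sup fun i => (S i).sup id :=
    (le_sup (f := id) ha).trans (le_sup (f := fun i => (S i).sup id) (mem_univ z.2.2.1))
  omega

lemma prod_symbolHooks {M : Type*} [CommMonoid M] (S : Fin d → Finset ℕ)
    (f : ℕ × ℕ × Fin d × Fin d → M) :
    ∏ z ∈ symbolHooks S, f z =
      ∏ i, ∏ j, ∏ p ∈ pairHooks (S i) (S j) (tieOffset i j), f (p.1, p.2, i, j) := by
  rw [← Fintype.prod_prod_type' (f := fun i j => ∏ p ∈ pairHooks (S i) (S j) (tieOffset i j),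
    f (p.1, p.2, i, j)), ← prod_sigma univ (fun x : Fin d × Fin d =>
    pairHooks (S x.1) (S x.2) (tieOffset x.1 x.2)) fun x => f (x.2.1, x.2.2, x.1.1, x.1.2)]
  refine prod_nbij' (fun z => ⟨(z.2.2.1, z.2.2.2), (z.1, z.2.1)⟩)
    (fun x => (x.2.1, x.2.2, x.1.1, x.1.2)) ?_ ?_ ?_ ?_ fun _ _ => rfl
  · intro z hz
    simpa [mem_symbolHooks] using hz
  · rintro ⟨⟨i, j⟩, p⟩ hx
    simpa [mem_symbolHooks] using hx
  · intro z _
    rfl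
  · intro x _
    rfl

lemma one_sub_tieOffset {i j : Fin d} (h : i ≠ j) : 1 - tieOffset i j = tieOffset j i := by
  have := Fin.val_ne_of_ne h
  unfold tieOffset
  split_ifs <;> simp only [Fin.lt_def] at * <;> omega

lemma pairHooks_self (A : Finset ℕ) {s s' : ℕ} (hs : s ≤ 1) (hs' : s' ≤ 1) :
    pairHooks A A s = pairHooks A A s' := by
  ext ⟨a, b⟩
  simp only [mem_pairHooks]
  constructor <;> rintro ⟨ha, hb, h⟩ <;> refine ⟨ha, hb, ?_⟩ <;>
    · have : b ≠ a := fun hba => hb (hba ▸ ha)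
      omega

lemma pairHooks_one_sub_tieOffset (S : Fin d → Finset ℕ) (i j : Fin d) :
    pairHooks (S j) (S i) (1 - tieOffset i j) = pairHooks (S j) (S i) (tieOffset j i) := by
  rcases eq_or_ne i j with rfl | h
  · exact pairHooks_self _ (Nat.sub_le 1 _) (tieOffset_le_one i i)
  · rw [one_sub_tieOffset h]

lemma hookLen_of_le (c : Fin d → ℝ) (k : ℝ) {a b : ℕ} (h : b ≤ a) (i j : Fin d) :
    hookLen c k (a, b, i, j) = k * (((a : ℤ) - b : ℤ) : ℝ) + c i - c j := by
  simp [hookLen, Nat.cast_sub h]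

lemma sq_abs_prod_hookLen (S : Fin d → Finset ℕ) (c : Fin d → ℝ) (k : ℝ) :
    |∏ z ∈ symbolHooks S, hookLen c k z| ^ 2 =
      ∏ i, ∏ j, pairHookProd (fun n : ℤ => |k * n + c i - c j|) (S i) (S j) (tieOffset i j)
        (1 - tieOffset i j) := by
  set F : Fin d → Fin d → ℝ := fun i j =>
    ∏ p ∈ pairHooks (S i) (S j) (tieOffset i j), |hookLen c k (p.1, p.2, i, j)|
  have hF : ∀ i j, pairHookProd (fun n : ℤ => |k * n + c i - c j|) (S i) (S j) (tieOffset i j)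
      (1 - tieOffset i j) = F i j * F j i := by
    intro i j
    rw [pairHookProd, pairHooks_one_sub_tieOffset]
    congr 1 <;> refine prod_congr rfl fun p hp => ?_ <;> rw [mem_pairHooks] at hp
    · rw [hookLen_of_le _ _ (by omega)]
    · rw [hookLen_of_le _ _ (by omega), ← abs_neg]
      push_cast
      ring_nf
  calc |∏ z ∈ symbolHooks S, hookLen c k z| ^ 2
      = (∏ i, ∏ j, F i j) * ∏ j, ∏ i, F i j := by
        rw [sq, abs_prod, prod_symbolHooks, ← prod_comm]
    _ = _ := by
        simp_rw [hF, prod_mul_distrib]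

lemma prod_hookLen_shiftUp (S : Fin d → Finset ℕ) (c : Fin d → ℝ) (k : ℝ) (w : ℕ) :
    ∏ z ∈ symbolHooks (fun u => shiftUp (S u) w), hookLen c k z =
      ∏ z ∈ symbolHooks S, hookLen c k z := by
  simp only [prod_symbolHooks, prod_pairHooks_shiftUp, hookLen, Nat.add_sub_add_right]

theorem abs_prod_hookLen_eq (S : Fin d → Finset ℕ) (c : Fin d → ℝ) (k : ℝ) {N : ℕ}
    (hN : ∀ u, #(S u) ≤ N) :
    |∏ z ∈ symbolHooks S, hookLen c k z| =
      |∏ z ∈ symbolHooks (coreSymbol S), hookLen c k z| *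
        |∏ z ∈ symbolHooks (fun u => shiftUp (S u) (N - #(S u))),
          hookLen (fun u => c u + #(S u) * k) k z| := by
  rw [← sq_eq_sq₀ (abs_nonneg _) (by positivity), mul_pow, sq_abs_prod_hookLen,
    sq_abs_prod_hookLen, sq_abs_prod_hookLen, ← prod_mul_distrib]
  refine prod_congr rfl fun i _ => ?_
  rw [← prod_mul_distrib]
  refine prod_congr rfl fun j _ => ?_
  have := hN i
  have := hN j
  rw [pairHookProd_eq (u := N - #(S i)) (v := N - #(S j)) (by omega)
    (Nat.add_sub_cancel' (tieOffset_le_one i j))]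
  congr 2
  funext n
  push_cast
  ring_nf

end Symbols

section Abacus

variable {d : ℕ}

lemma add_mul_div_eq (i : Fin d) (k : ℕ) : ((i : ℕ) + k * d) / d = k := by
  rw [Nat.add_mul_div_right _ _ (i.pos), Nat.div_eq_of_lt i.isLt, zero_add]

lemma add_mul_mod_eq (i : Fin d) (k : ℕ) : ((i : ℕ) + k * d) % d = i := by
  rw [Nat.add_mul_mod_self_right, Nat.mod_eq_of_lt i.isLt]

lemma mem_sd {X : Finset ℕ} {i : Fin d} {k : ℕ} :
    k ∈ sd d X i ↔ (i : ℕ) + k * d ∈ X := by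
  simp only [sd, mem_image, mem_filter]
  constructor
  · rintro ⟨a, ⟨ha, hmod⟩, rfl⟩
    rwa [← hmod, Nat.mod_add_div']
  · exact fun h => ⟨_, ⟨h, add_mul_mod_eq i k⟩, add_mul_div_eq i k⟩

lemma sd_sdInv (S : Fin d → Finset ℕ) : sd d (sdInv d S) = S := by
  funext i
  ext k
  simp only [mem_sd, sdInv, mem_biUnion, mem_univ, mem_image, true_and]
  constructor
  · rintro ⟨j, l, hl, h⟩
    obtain rfl : j = i := Fin.ext (by simpa [Nat.mod_eq_of_lt] using congrArg (· % d) h)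
    obtain rfl : l = k := by simpa [add_mul_div_eq] using congrArg (· / d) h
    exact hl
  · exact fun hk => ⟨i, k, hk, rfl⟩

lemma add_tieOffset_le_iff_lt {i j : Fin d} {a b : ℕ} :
    b + tieOffset i j ≤ a ↔ (j : ℕ) + b * d < i + a * d := by
  rw [add_tieOffset_le_iff, Fin.lt_def]
  have hi := i.isLt
  have hj := j.isLt
  rcases lt_trichotomy b a with h | rfl | h
  · have := Nat.mul_le_mul_right d (Nat.succ_le_of_lt h)
    rw [Nat.succ_mul] at this
    exact iff_of_true (.inl h) (by omega)
  · simp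
  · have := Nat.mul_le_mul_right d (Nat.succ_le_of_lt h)
    rw [Nat.succ_mul] at this
    exact iff_of_false (by omega) (by omega)

lemma mem_betaHooks {X : Finset ℕ} {p : ℕ × ℕ} :
    p ∈ betaHooks X ↔ p.1 ∈ X ∧ p.2 ∉ X ∧ p.2 < p.1 := by
  simp only [betaHooks, mem_filter, mem_product, mem_range]
  constructor
  · rintro ⟨⟨h1, -⟩, h3, h4⟩
    exact ⟨h1, h4, h3⟩
  · rintro ⟨h1, h2, h3⟩
    exact ⟨⟨h1, by have := le_sup (f := id) h1; simp only [id] at this; omega⟩, h3, h2⟩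

theorem prod_betaHooks_eq_prod_hookLen (hd : 0 < d) (X : Finset ℕ) :
    ∏ p ∈ betaHooks X, ((p.1 - p.2 : ℕ) : ℝ) =
      ∏ z ∈ symbolHooks (sd d X), hookLen (fun i => ((i : ℕ) : ℝ)) d z := by
  symm
  refine prod_nbij' (fun z => ((z.2.2.1 : ℕ) + z.1 * d, (z.2.2.2 : ℕ) + z.2.1 * d))
    (fun p => (p.1 / d, p.2 / d, ⟨p.1 % d, Nat.mod_lt _ hd⟩, ⟨p.2 % d, Nat.mod_lt _ hd⟩))
    ?_ ?_ ?_ ?_ ?_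
  · intro z hz
    rw [mem_symbolHooks, mem_pairHooks, mem_sd, mem_sd, add_tieOffset_le_iff_lt] at hz
    exact mem_betaHooks.2 hz
  · intro p hp
    rw [mem_symbolHooks, mem_pairHooks, mem_sd, mem_sd, add_tieOffset_le_iff_lt]
    simpa only [Nat.mod_add_div'] using mem_betaHooks.1 hp
  · intro z _
    ext <;> simp [add_mul_div_eq, Nat.mod_eq_of_lt]
  · intro p _
    ext <;> simp [Nat.mod_add_div']
  · intro z hz
    rw [mem_symbolHooks, mem_pairHooks] at hz
    have hlt := add_tieOffset_le_iff_lt.1 hz.2.2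
    rw [hookLen, Nat.cast_sub hlt.le, Nat.cast_sub (by omega)]
    push_cast
    ring

end Abacus

end BetaSet

open BetaSet

theorem IsBalancedQuotient.shiftUp_eq {d N : ℕ} {S Y : Fin d → Finset ℕ}
    (hY : IsBalancedQuotient S Y) (hN : ∀ u, #(S u) ≤ N) (u : Fin d) :
    shiftUp (Y u) (N - quotCard S) = shiftUp (S u) (N - #(S u)) := by
  have hr : quotCard S ≤ N := Finset.sup_le fun u _ => (card_partitionOf_le (S u)).trans (hN u)
  have := hN u
  refine eq_of_card_eq_of_partitionOf_eq ?_ ?_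
  · rw [card_shiftUp, card_shiftUp, (hY u).1]
    omega
  · rw [partitionOf_shiftUp, partitionOf_shiftUp, (hY u).2]

/-- `∏𝓗(X) = (∏𝓗(C_d(X))) · |∏𝓗^δ(Q)|`, where `C_d(X) = s_d⁻¹(C(s_d X))` is the
`d`-core of the β-set `X`, `Q` the balanced quotient of `s_d(X)`, and
`δ = (x_0 d, 1 + x_1 d,…,(d−1) + x_{d−1} d; d)` with `x_i = |X_i^{(d)}|`. -/
theorem prod_hooks_eq_core_mul_abs_quot (d : ℕ) (hd : 0 < d) (X : Finset ℕ)
    (Y : Fin d → Finset ℕ) (hY : IsBalancedQuotient (sd d X) Y) :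
    ((betaHooks X).val.map (fun p => ((p.1 - p.2 : ℕ) : ℝ))).prod =
      ((betaHooks (sdInv d (coreSymbol (sd d X)))).val.map
          (fun p => ((p.1 - p.2 : ℕ) : ℝ))).prod *
        |(hookLens (fun i => ((i : ℕ) : ℝ) + ((sd d X i).card : ℝ) * (d : ℝ)) (d : ℝ)
            Y).prod| := by
  set T := sd d X
  have hN (u : Fin d) : #(T u) ≤ univ.sup fun u => #(T u) :=
    le_sup (f := fun u => #(T u)) (mem_univ u)
  have hnonneg (Z : Finset ℕ) : 0 ≤ ∏ p ∈ betaHooks Z, ((p.1 - p.2 : ℕ) : ℝ) :=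
    prod_nonneg fun _ _ => Nat.cast_nonneg _
  have hcore : ∏ z ∈ symbolHooks (coreSymbol T), hookLen (fun i => ((i : ℕ) : ℝ)) d z =
      ∏ p ∈ betaHooks (sdInv d (coreSymbol T)), ((p.1 - p.2 : ℕ) : ℝ) := by
    rw [prod_betaHooks_eq_prod_hookLen hd, sd_sdInv]
  calc ∏ p ∈ betaHooks X, ((p.1 - p.2 : ℕ) : ℝ)
      = |∏ z ∈ symbolHooks T, hookLen (fun i => ((i : ℕ) : ℝ)) d z| := by
        rw [← prod_betaHooks_eq_prod_hookLen hd, abs_of_nonneg (hnonneg X)]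
    _ = _ := abs_prod_hookLen_eq T _ _ hN
    _ = _ := by
        rw [← funext (hY.shiftUp_eq hN), prod_hookLen_shiftUp, hcore, abs_of_nonneg (hnonneg _)]
        rfl
end
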